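/- arXiv:1503.03735 — 3 statements merged into one kernel-verified Lean document; each statement's English description precedes it below -/
import Mathlib

section
/- Let $B=B(0,R)\subset\mathbb{R}^d$ and let $F\in L^\infty(B)$ be radial, $F(x)=f(|x|)$, with $\int_B F=0$. Define $v(r)=r^{-d}\int_0^r f(s)s^{d-1}\,ds$ and $V(x)=v(|x|)x$. Then $V\in W^{1,\infty}_0(B,\mathbb{R}^d)$, $\nabla\cdot V=F$ in the distributional sense, and $\|\nabla V\|_{L^\infty(B)}\leq C\|F\|_{L^\infty(B)}$ for a constant $C$ depending only on $d$. -/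
open MeasureTheory intervalIntegral
open Set Function Metric
set_option maxHeartbeats 2000000

open Set Function Metric in
lemma stmt1_integral_volumeIoiPow (n : ℕ) (u : ℝ → ℝ) :
    ∫ y : Ioi (0:ℝ), u y ∂(Measure.volumeIoiPow n) = ∫ r in Ioi (0:ℝ), r ^ n * u r := by
  simp only [Measure.volumeIoiPow, ENNReal.ofReal]
  rw [integral_withDensity_eq_integral_smul ((measurable_subtype_coe.pow_const _).real_toNNReal),
    integral_subtype_comap measurableSet_Ioi fun a ↦ Real.toNNReal (a ^ n) • u a,
    setIntegral_congr_fun measurableSet_Ioi fun x hx ↦ ?_]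
  rw [NNReal.smul_def, Real.coe_toNNReal _ (pow_nonneg hx.out.le _), smul_eq_mul]

open Set Function Metric in
lemma stmt1_integral_polar {E : Type*} [NormedAddCommGroup E] [NormedSpace ℝ E]
    [MeasurableSpace E] [BorelSpace E] [FiniteDimensional ℝ E] [Nontrivial E]
    (μ : Measure E) [μ.IsAddHaarMeasure] (g : E → ℝ) (hg : Integrable g μ) :
    ∫ x, g x ∂μ = ∫ ω : sphere (0:E) 1,
      (∫ r in Ioi (0:ℝ), r ^ (Module.finrank ℝ E - 1) * g (r • (ω:E))) ∂μ.toSphere := by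
  have h1 : ∫ x, g x ∂μ = ∫ x : ({(0)}ᶜ : Set E), g x.1 ∂(μ.comap (↑)) := by
    rw [integral_subtype_comap (measurableSet_singleton _).compl fun x ↦ g x,
      MeasureTheory.restrict_compl_singleton]
  have h3 : ((fun p : sphere (0:E) 1 × Ioi (0:ℝ) ↦ g ((p.2 : ℝ) • (p.1 : E))) ∘
      (homeomorphUnitSphereProd E)) = fun x : ({(0)}ᶜ : Set E) ↦ g x.1 := by
    funext x
    simp only [comp_apply]
    congr 1
    simp [smul_smul, mul_inv_cancel₀ (norm_ne_zero_iff.2 x.2)]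
  have h5 : Integrable (g ∘ (Subtype.val : ({(0)}ᶜ : Set E) → E)) (μ.comap (↑)) := by
    rw [← (MeasurableEmbedding.subtype_coe (measurableSet_singleton (0:E)).compl).integrable_map_iff,
      map_comap_subtype_coe (measurableSet_singleton (0:E)).compl]
    exact hg.integrableOn
  have h4 : Integrable (fun p : sphere (0:E) 1 × Ioi (0:ℝ) ↦ g ((p.2 : ℝ) • (p.1 : E)))
      (μ.toSphere.prod (Measure.volumeIoiPow (Module.finrank ℝ E - 1))) := by
    rw [← μ.measurePreserving_homeomorphUnitSphereProd.integrable_comp_emb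
      (Homeomorph.measurableEmbedding _), h3]
    exact h5
  have h2 := μ.measurePreserving_homeomorphUnitSphereProd.integral_comp
    (Homeomorph.measurableEmbedding _)
    (fun p : sphere (0:E) 1 × Ioi (0:ℝ) ↦ g ((p.2 : ℝ) • (p.1 : E)))
  have h2' : ∫ x : ({(0)}ᶜ : Set E), g x.1 ∂(μ.comap (↑)) =
      ∫ y : sphere (0:E) 1 × Ioi (0:ℝ), g ((y.2 : ℝ) • (y.1 : E))
        ∂(μ.toSphere.prod (Measure.volumeIoiPow (Module.finrank ℝ E - 1))) := by
    rw [← h2]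
    exact integral_congr_ae (Filter.Eventually.of_forall fun x ↦ (congrFun h3 x).symm)
  rw [h1, h2', MeasureTheory.integral_prod _ h4]
  exact integral_congr_ae (Filter.Eventually.of_forall fun ω ↦
    stmt1_integral_volumeIoiPow _ (fun r ↦ g (r • (ω : E))))

open Set Function Metric in
lemma stmt1_integrableOn_of_bound (a b K : ℝ) (f : ℝ → ℝ)
    (hf : AEStronglyMeasurable f (volume.restrict (Ioo a b)))
    (hK : ∀ s ∈ Ioo a b, |f s| ≤ K) : IntegrableOn f (Ioo a b) := by
  refine Integrable.mono' (g := fun _ => K) ?_ hf ?_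
  · exact integrableOn_const measure_Ioo_lt_top.ne
  · filter_upwards [ae_restrict_mem measurableSet_Ioo] with s hs
    simpa [Real.norm_eq_abs] using hK s hs

open Set Function Metric in
lemma stmt1_wseg (R : ℝ) (n : ℕ) (f : ℝ → ℝ) (hf : Measurable f) (M : ℝ) (hM : 0 ≤ M)
    (hfM : ∀ s ∈ Ioo (0:ℝ) R, |f s| ≤ M) (s r : ℝ) (h0 : 0 ≤ s) (hsr : s ≤ r) (hrR : r ≤ R) :
    |∫ t in s..r, f t * t ^ n| ≤ M * (r ^ (n+1) - s ^ (n+1)) / (n+1) := by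
  have hsub : Ioo s r ⊆ Ioo 0 R := Ioo_subset_Ioo (by linarith) hrR
  have hmeas : AEStronglyMeasurable (fun t => f t * t ^ n) (volume.restrict (Ioo s r)) :=
    ((hf.mul (measurable_id.pow_const n)).aestronglyMeasurable)
  have h1 : IntegrableOn (fun t => f t * t ^ n) (Ioo s r) := by
    refine stmt1_integrableOn_of_bound s r (M * r ^ n) _ hmeas fun t ht => ?_
    rw [abs_mul, abs_pow, abs_of_nonneg (le_trans h0 ht.1.le)]
    exact mul_le_mul (hfM t (hsub ht)) (pow_le_pow_left₀ (le_trans h0 ht.1.le) ht.2.le n)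
      (pow_nonneg (le_trans h0 ht.1.le) n) hM
  have h2 : IntegrableOn (fun t => M * t ^ n) (Ioo s r) := by
    refine stmt1_integrableOn_of_bound s r (M * r ^ n) _
      (continuous_const.mul (continuous_pow n)).aestronglyMeasurable.restrict fun t ht => ?_
    rw [abs_mul, abs_pow, abs_of_nonneg hM, abs_of_nonneg (le_trans h0 ht.1.le)]
    exact mul_le_mul_of_nonneg_left (pow_le_pow_left₀ (le_trans h0 ht.1.le) ht.2.le n) hM
  rw [intervalIntegral.integral_of_le hsr, integral_Ioc_eq_integral_Ioo]
  calc |∫ t in Ioo s r, f t * t ^ n| ≤ ∫ t in Ioo s r, |f t * t ^ n| := by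
        have := norm_integral_le_integral_norm (μ := volume.restrict (Ioo s r))
          (fun t => f t * t ^ n)
        simpa only [Real.norm_eq_abs] using this
    _ ≤ ∫ t in Ioo s r, M * t ^ n := by
        refine integral_mono_ae h1.abs h2 ?_
        filter_upwards [ae_restrict_mem measurableSet_Ioo] with t ht
        rw [abs_mul, abs_pow, abs_of_nonneg (le_trans h0 ht.1.le)]
        exact mul_le_mul_of_nonneg_right (hfM t (hsub ht)) (pow_nonneg (le_trans h0 ht.1.le) n)
    _ = M * (r ^ (n+1) - s ^ (n+1)) / (n+1) := by
        rw [← integral_Ioc_eq_integral_Ioo, ← intervalIntegral.integral_of_le hsr,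
          intervalIntegral.integral_const_mul, integral_pow]
        ring

open Set Function Metric in
lemma stmt1_intervalIntegrable (R : ℝ) (n : ℕ) (f : ℝ → ℝ) (hf : Measurable f) (M : ℝ)
    (hM : 0 ≤ M) (hfM : ∀ s ∈ Ioo (0:ℝ) R, |f s| ≤ M) (b : ℝ) (h0 : 0 ≤ b) (hbR : b ≤ R) :
    IntervalIntegrable (fun t => f t * t ^ n) volume 0 b := by
  rw [intervalIntegrable_iff_integrableOn_Ioo_of_le h0]
  refine stmt1_integrableOn_of_bound 0 b (M * b ^ n) _
    ((hf.mul (measurable_id.pow_const n)).aestronglyMeasurable) fun t ht => ?_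
  rw [abs_mul, abs_pow, abs_of_nonneg ht.1.le]
  exact mul_le_mul (hfM t (Ioo_subset_Ioo le_rfl hbR ht))
    (pow_le_pow_left₀ ht.1.le ht.2.le n) (pow_nonneg ht.1.le n) hM

lemma stmt1_pow_diff_le (n : ℕ) (s r : ℝ) (h0 : 0 ≤ s) (hsr : s ≤ r) :
    r ^ (n+1) - s ^ (n+1) ≤ (n+1) * r ^ n * (r - s) := by
  have hgeom := geom_sum₂_mul r s (n+1)
  rw [← hgeom]
  have hbd : ∀ i ∈ Finset.range (n+1), r ^ i * s ^ (n - i) ≤ r ^ n := by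
    intro i hi
    rw [Finset.mem_range] at hi
    calc r ^ i * s ^ (n - i) ≤ r ^ i * r ^ (n - i) := by
          exact mul_le_mul_of_nonneg_left (pow_le_pow_left₀ h0 hsr _) (pow_nonneg (h0.trans hsr) i)
      _ = r ^ n := by rw [← pow_add]; congr 1; omega
  have hsum : (∑ i ∈ Finset.range (n+1), r ^ i * s ^ (n + 1 - 1 - i)) ≤ (n+1) * r ^ n := by
    calc (∑ i ∈ Finset.range (n+1), r ^ i * s ^ (n + 1 - 1 - i)) ≤
        ∑ _i ∈ Finset.range (n+1), r ^ n := Finset.sum_le_sum (by simpa using hbd)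
      _ = (n+1) * r ^ n := by simp [Finset.sum_const, mul_comm]
  exact mul_le_mul_of_nonneg_right hsum (by linarith)

open Set Function Metric in
lemma stmt1_parts (R : ℝ) (hR : 0 < R) (n : ℕ) (f : ℝ → ℝ) (hf : Measurable f) (M : ℝ)
    (hM : 0 ≤ M) (hfM : ∀ s ∈ Ioo (0:ℝ) R, |f s| ≤ M)
    (g g' : ℝ → ℝ) (hg : ∀ r, HasDerivAt g (g' r) r) (hg' : Continuous g')
    (hgR : g R = 0) :
    ∫ r in (0:ℝ)..R, (∫ s in (0:ℝ)..r, f s * s ^ n) * g' r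
      = - ∫ r in (0:ℝ)..R, f r * r ^ n * g r := by
  obtain ⟨C, hC⟩ := (isCompact_Icc (a := (0:ℝ)) (b := R)).exists_bound_of_continuousOn
    hg'.continuousOn
  have hC0 : 0 ≤ C := le_trans (norm_nonneg _) (hC 0 ⟨le_refl _, hR.le⟩)
  set T := Ioo (0:ℝ) R with hT
  set H : ℝ → ℝ → ℝ := fun r s => (Ioo (0:ℝ) r).indicator (fun s => f s * s ^ n) s * g' r
    with hH
  have hmeas : Measurable (uncurry H) := by
    have : uncurry H = fun p : ℝ × ℝ =>
        ({q : ℝ × ℝ | 0 < q.2 ∧ q.2 < q.1}).indicator (fun q => f q.2 * q.2 ^ n) p * g' p.1 := by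
      funext p
      by_cases h : p.2 ∈ Ioo 0 p.1
      · simp [hH, uncurry, Set.indicator_of_mem h, Set.indicator_of_mem, h.1, h.2,
          Set.mem_setOf_eq]
      · rw [Set.mem_Ioo, not_and_or] at h
        simp only [hH, uncurry]
        rcases h with h | h
        · rw [Set.indicator_of_notMem (fun h' => h h'.1),
            Set.indicator_of_notMem (fun h' => h h'.1)]
        · rw [Set.indicator_of_notMem (fun h' => h h'.2),
            Set.indicator_of_notMem (fun h' => h h'.2)]
    rw [this]
    exact (((hf.comp measurable_snd).mul (measurable_snd.pow_const n)).indicator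
      ((measurableSet_lt measurable_const measurable_snd).inter
        (measurableSet_lt measurable_snd measurable_fst))).mul (hg'.measurable.comp measurable_fst)
  have hTfin : IsFiniteMeasure (volume.restrict T) := by
    constructor
    rw [Measure.restrict_apply_univ]
    exact (measure_Ioo_lt_top)
  have hint : Integrable (uncurry H) ((volume.restrict T).prod (volume.restrict T)) := by
    haveI := hTfin
    refine Integrable.mono' (integrable_const (M * R ^ n * C)) hmeas.aestronglyMeasurable ?_
    rw [Measure.prod_restrict]
    filter_upwards [ae_restrict_mem (measurableSet_Ioo.prod measurableSet_Ioo)] with p hp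
    obtain ⟨hp1, hp2⟩ := hp
    simp only [uncurry, hH, Real.norm_eq_abs, abs_mul]
    by_cases h : p.2 ∈ Ioo 0 p.1
    · rw [Set.indicator_of_mem h]
      have h1 : |f p.2| ≤ M := hfM p.2 hp2
      have h2 : |p.2 ^ n| ≤ R ^ n := by
        rw [abs_pow, abs_of_pos hp2.1]
        exact pow_le_pow_left₀ hp2.1.le hp2.2.le n
      have h3 : |g' p.1| ≤ C := by
        have := hC p.1 ⟨hp1.1.le, hp1.2.le⟩
        rwa [Real.norm_eq_abs] at this
      calc |f p.2 * p.2 ^ n| * |g' p.1| ≤ (M * R ^ n) * C := by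
            apply mul_le_mul _ h3 (abs_nonneg _) (by positivity)
            rw [abs_mul]
            exact mul_le_mul h1 h2 (abs_nonneg _) hM
      _ = M * R ^ n * C := by ring
    · rw [Set.indicator_of_notMem h]
      simp only [abs_zero, zero_mul]
      positivity
  have hA : ∫ r in (0:ℝ)..R, (∫ s in (0:ℝ)..r, f s * s ^ n) * g' r
      = ∫ r in T, (∫ s in T, H r s) := by
    rw [intervalIntegral.integral_of_le hR.le, integral_Ioc_eq_integral_Ioo]
    refine setIntegral_congr_fun measurableSet_Ioo (fun r hr => ?_)
    have h1 : ∫ s in T, H r s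
        = (∫ s in T, (Ioo (0:ℝ) r).indicator (fun s => f s * s ^ n) s) * g' r :=
      integral_mul_const _ _
    rw [h1, setIntegral_indicator measurableSet_Ioo,
      Set.inter_eq_self_of_subset_right (Set.Ioo_subset_Ioo le_rfl hr.2.le),
      intervalIntegral.integral_of_le hr.1.le, integral_Ioc_eq_integral_Ioo]
  have hB := integral_integral_swap (f := H) hint
  have hC2 : ∀ s ∈ T, (∫ r in T, H r s) = f s * s ^ n * (0 - g s) := by
    intro s hs
    have hfun : (fun r => H r s) = fun r => (f s * s ^ n) * (Ioi s).indicator g' r := by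
      funext r
      by_cases h : s < r
      · simp [hH, Set.indicator_apply, Set.mem_Ioo, Set.mem_Ioi, hs.1, h]
      · simp [hH, Set.indicator_apply, Set.mem_Ioo, Set.mem_Ioi, h]
    rw [hfun, MeasureTheory.integral_const_mul]
    congr 1
    have hTs : T ∩ Ioi s = Ioo s R :=
      Set.ext fun r => ⟨fun h => ⟨h.2, h.1.2⟩, fun h => ⟨⟨hs.1.trans h.1, h.2⟩, h.1⟩⟩
    rw [setIntegral_indicator measurableSet_Ioi, hTs, ← integral_Ioc_eq_integral_Ioo,
      ← intervalIntegral.integral_of_le hs.2.le,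
      intervalIntegral.integral_eq_sub_of_hasDerivAt (fun x _ => hg x)
        (hg'.intervalIntegrable s R), hgR]
  rw [hA, hB, setIntegral_congr_fun measurableSet_Ioo hC2,
    intervalIntegral.integral_of_le hR.le, integral_Ioc_eq_integral_Ioo,
    ← MeasureTheory.integral_neg]
  exact setIntegral_congr_fun measurableSet_Ioo (fun s hs => by ring)

/-- Construction of a radial vector field with prescribed radial divergence:
if `F(x) = f(|x|)` is bounded on the ball `B = B(0,R)` with `∫_B F = 0`, then
`V(x) = v(|x|)x`, with `v(r) = r^{-d}∫₀^r f(s)s^{d-1}ds`, vanishes on `∂B`, is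
Lipschitz on `B̄` with constant `C‖F‖_∞` (i.e. `V ∈ W^{1,∞}₀(B)` with
`‖∇V‖_∞ ≤ C‖F‖_∞`) and satisfies `∇·V = F` in the distributional sense on `B`. -/
theorem stmt_1 (d : ℕ) (hd : 1 ≤ d) :
    ∃ C : ℝ, 0 < C ∧
      ∀ (R : ℝ), 0 < R →
      ∀ (f : ℝ → ℝ), Measurable f →
      ∀ (M : ℝ), 0 ≤ M → (∀ s ∈ Set.Ioo (0 : ℝ) R, |f s| ≤ M) →
      ∀ (F : EuclideanSpace ℝ (Fin d) → ℝ), (∀ x, F x = f ‖x‖) →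
      (∫ x in Metric.ball (0 : EuclideanSpace ℝ (Fin d)) R, F x) = 0 →
      ∀ (V : EuclideanSpace ℝ (Fin d) → EuclideanSpace ℝ (Fin d)),
        (∀ x, V x = ((∫ s in (0:ℝ)..‖x‖, f s * s ^ (d - 1)) / ‖x‖ ^ d) • x) →
        (∀ x, ‖x‖ = R → V x = 0) ∧
        LipschitzOnWith (Real.toNNReal (C * M)) V
          (Metric.closedBall (0 : EuclideanSpace ℝ (Fin d)) R) ∧
        (∀ φ : EuclideanSpace ℝ (Fin d) → ℝ, ContDiff ℝ (⊤ : ℕ∞) φ →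
          tsupport φ ⊆ Metric.ball (0 : EuclideanSpace ℝ (Fin d)) R →
          (∫ x in Metric.ball (0 : EuclideanSpace ℝ (Fin d)) R,
              (inner ℝ (V x) (gradient φ x) : ℝ)) =
            -∫ x in Metric.ball (0 : EuclideanSpace ℝ (Fin d)) R, F x * φ x) := by
  refine ⟨3, by norm_num, ?_⟩
  intro R hR f hf M hM hfM F hF hFzero V hV
  obtain ⟨n, rfl⟩ : ∃ n, d = n + 1 := ⟨d - 1, (Nat.succ_pred_eq_of_pos hd).symm⟩
  simp only [Nat.add_sub_cancel] at hV
  have hfr : Module.finrank ℝ (EuclideanSpace ℝ (Fin (n+1))) = n + 1 := finrank_euclideanSpace_fin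
  haveI hnt : Nontrivial (EuclideanSpace ℝ (Fin (n+1))) := by infer_instance
  set w : ℝ → ℝ := fun t => ∫ s in (0:ℝ)..t, f s * s ^ n with hw
  have hD : (1:ℝ) ≤ (n+1:ℕ) := by exact_mod_cast Nat.one_le_iff_ne_zero.2 (Nat.succ_ne_zero n)
  have hwb : ∀ r, 0 ≤ r → r ≤ R → |w r| ≤ M * r^(n+1)/(n+1) := by
    intro r h0 h1
    have := stmt1_wseg R n f hf M hM hfM 0 r le_rfl h0 h1
    simpa [hw, zero_pow (Nat.succ_ne_zero n)] using this
  -- ∫₀ᴿ f s s^n ds = 0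
  have h0ae : ∀ᵐ x : EuclideanSpace ℝ (Fin (n+1)) ∂volume, x ≠ 0 := by
    rw [ae_iff]
    have : {x : EuclideanSpace ℝ (Fin (n+1)) | ¬ x ≠ 0} = {0} := by ext x; simp
    rw [this]
    exact measure_singleton 0
  have hgm : ∀ᵐ x : EuclideanSpace ℝ (Fin (n+1)) ∂volume,
      (Metric.ball (0 : EuclideanSpace ℝ (Fin (n+1))) R).indicator F x
        = (Ioo (0:ℝ) R).indicator f ‖x‖ := by
    filter_upwards [h0ae] with x hx
    by_cases hlt : ‖x‖ < R
    · rw [indicator_of_mem (mem_ball_zero_iff.2 hlt),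
        indicator_of_mem (Set.mem_Ioo.mpr ⟨norm_pos_iff.2 hx, hlt⟩), hF]
    · rw [indicator_of_notMem (fun hm => hlt (mem_ball_zero_iff.1 hm)),
        indicator_of_notMem (fun hm : ‖x‖ ∈ Ioo (0:ℝ) R => hlt hm.2)]
  have hinner : ∫ y in Ioi (0:ℝ), y ^ n • (Ioo (0:ℝ) R).indicator f y = w R := by
    rw [setIntegral_congr_fun measurableSet_Ioi
      (fun y _ => show y ^ n • (Ioo (0:ℝ) R).indicator f y
          = (Ioo (0:ℝ) R).indicator (fun s => f s * s ^ n) y by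
        by_cases h : y ∈ Ioo (0:ℝ) R <;> simp [indicator_apply, h, mul_comm]),
      setIntegral_indicator measurableSet_Ioo,
      Set.inter_eq_self_of_subset_right (fun y hy => hy.1),
      ← integral_Ioc_eq_integral_Ioo, ← intervalIntegral.integral_of_le hR.le]
  have key : (0:ℝ) = (Module.finrank ℝ (EuclideanSpace ℝ (Fin (n+1))))
      • volume.real (Metric.ball (0 : EuclideanSpace ℝ (Fin (n+1))) 1)
      • ∫ y in Ioi (0:ℝ), y ^ (Module.finrank ℝ (EuclideanSpace ℝ (Fin (n+1))) - 1)
          • (Ioo (0:ℝ) R).indicator f y := by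
    rw [← integral_fun_norm_addHaar volume ((Ioo (0:ℝ) R).indicator f),
      ← integral_congr_ae hgm, MeasureTheory.integral_indicator measurableSet_ball, hFzero]
  have hwR : w R = 0 := by
    rw [hfr, Nat.add_sub_cancel, hinner] at key
    have hc : 0 < (volume (Metric.ball (0 : EuclideanSpace ℝ (Fin (n+1))) 1)).toReal :=
      ENNReal.toReal_pos (measure_ball_pos volume 0 one_pos).ne' measure_ball_lt_top.ne
    have := key
    rw [nsmul_eq_mul, smul_eq_mul] at this
    rcases mul_eq_zero.1 this.symm with h | h
    · exact absurd h (by positivity)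
    · rcases mul_eq_zero.1 h with h2 | h2
      · exact absurd h2 hc.ne'
      · exact h2
  have hlip : LipschitzOnWith (Real.toNNReal (3 * M)) V
      (Metric.closedBall (0 : EuclideanSpace ℝ (Fin (n+1))) R) := by
    rw [lipschitzOnWith_iff_dist_le_mul]
    have h3M : (Real.toNNReal (3 * M) : ℝ) = 3 * M := Real.coe_toNNReal _ (by positivity)
    have hD0 : (0:ℝ) < (n:ℝ) + 1 := by positivity
    suffices claim : ∀ x y : EuclideanSpace ℝ (Fin (n+1)), x ∈ closedBall (0:EuclideanSpace ℝ (Fin (n+1))) R →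
        y ∈ closedBall (0:EuclideanSpace ℝ (Fin (n+1))) R → ‖y‖ ≤ ‖x‖ →
        dist (V x) (V y) ≤ 3 * M * dist x y by
      intro x hx y hy
      rw [h3M]
      rcases le_total ‖y‖ ‖x‖ with h | h
      · exact claim x y hx hy h
      · rw [dist_comm, dist_comm x y]; exact claim y x hy hx h
    intro x y hx hy hxy
    rw [mem_closedBall, dist_zero_right] at hx hy
    rcases eq_or_lt_of_le (norm_nonneg x) with hx0 | hx0
    · have hxx : x = 0 := norm_eq_zero.1 hx0.symm
      have hyy : y = 0 := norm_eq_zero.1 (le_antisymm (hx0 ▸ hxy) (norm_nonneg y))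
      subst hxx; subst hyy
      simp only [dist_self]
      positivity
    have hVx : V x = (w ‖x‖ / ‖x‖ ^ (n+1)) • x := hV x
    have hVy : V y = (w ‖y‖ / ‖y‖ ^ (n+1)) • y := hV y
    set r : ℝ := ‖x‖ with hr
    set s : ℝ := ‖y‖ with hs
    set a : ℝ := w r / r ^ (n+1) with ha
    set b : ℝ := w s / s ^ (n+1) with hb
    have hP : (0:ℝ) < r ^ (n+1) := pow_pos hx0 _
    have hrR : r ≤ R := hx
    have hsr : s ≤ r := hxy
    have hs0 : (0:ℝ) ≤ s := norm_nonneg y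
    have bound1 : |a| ≤ M := by
      rw [ha, abs_div, abs_of_pos hP, div_le_iff₀ hP]
      calc |w r| ≤ M * r ^ (n+1) / ((n:ℝ)+1) := by
            have := hwb r (norm_nonneg x) hrR
            exact_mod_cast this
        _ ≤ M * r ^ (n+1) := div_le_self (by positivity) (by exact_mod_cast hD)
    have bound2 : |a - b| * s ≤ 2 * M * ‖x - y‖ := by
      have hnormsub : r - s ≤ ‖x - y‖ := by
        have := norm_sub_norm_le x y
        linarith
      rcases eq_or_lt_of_le hs0 with hsz | hsz
      · rw [← hsz, mul_zero]
        positivity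
      -- 0 < s
      have hQ : (0:ℝ) < s ^ (n+1) := pow_pos hsz _
      have hQP : s ^ (n+1) ≤ r ^ (n+1) := pow_le_pow_left₀ hs0 hsr _
      have hiint : ∀ b : ℝ, 0 ≤ b → b ≤ R →
          IntervalIntegrable (fun t => f t * t ^ n) volume 0 b :=
        fun b h0 h1 => stmt1_intervalIntegrable R n f hf M hM hfM b h0 h1
      have hwdiff : |w r - w s| ≤ M * (r ^ (n+1) - s ^ (n+1)) / ((n:ℝ)+1) := by
        have hsub : w r - w s = ∫ t in s..r, f t * t ^ n :=
          integral_interval_sub_left (hiint r (norm_nonneg x) hrR) (hiint s hs0 (hsr.trans hrR))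
        rw [hsub]
        have := stmt1_wseg R n f hf M hM hfM s r hs0 hsr hrR
        exact_mod_cast this
      have h1 : ((n:ℝ)+1) * |w r - w s| ≤ M * (r ^ (n+1) - s ^ (n+1)) := by
        rw [mul_comm]
        exact (le_div_iff₀ hD0).1 hwdiff
      have h2 : ((n:ℝ)+1) * |w s| ≤ M * s ^ (n+1) := by
        rw [mul_comm]
        refine (le_div_iff₀ hD0).1 ?_
        have := hwb s hs0 (hsr.trans hrR)
        exact_mod_cast this
      have habs : |w r * s ^ (n+1) - w s * r ^ (n+1)| ≤
          |w r - w s| * s ^ (n+1) + |w s| * (r ^ (n+1) - s ^ (n+1)) := by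
        have hid : w r * s ^ (n+1) - w s * r ^ (n+1)
            = (w r - w s) * s ^ (n+1) + (w s * (s ^ (n+1) - r ^ (n+1))) := by ring
        rw [hid]
        refine (abs_add_le _ _).trans ?_
        rw [abs_mul, abs_mul, abs_of_pos hQ, abs_sub_comm (s ^ (n+1)) (r ^ (n+1)),
          abs_of_nonneg (sub_nonneg.2 hQP)]
      have hab : a - b = (w r * s ^ (n+1) - w s * r ^ (n+1)) / (r ^ (n+1) * s ^ (n+1)) := by
        rw [ha, hb]
        field_simp
      have h4 : |a - b| ≤ 2 * M * (r ^ (n+1) - s ^ (n+1)) / (((n:ℝ)+1) * r ^ (n+1)) := by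
        rw [hab, abs_div, abs_of_pos (mul_pos hP hQ),
          div_le_div_iff₀ (mul_pos hP hQ) (mul_pos hD0 hP)]
        calc |w r * s ^ (n+1) - w s * r ^ (n+1)| * (((n:ℝ)+1) * r ^ (n+1))
            ≤ (|w r - w s| * s ^ (n+1) + |w s| * (r ^ (n+1) - s ^ (n+1))) * (((n:ℝ)+1) * r ^ (n+1)) := by
              apply mul_le_mul_of_nonneg_right habs (by positivity)
          _ = (((n:ℝ)+1) * |w r - w s|) * (s ^ (n+1) * r ^ (n+1))
              + (((n:ℝ)+1) * |w s|) * ((r ^ (n+1) - s ^ (n+1)) * r ^ (n+1)) := by ring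
          _ ≤ (M * (r ^ (n+1) - s ^ (n+1))) * (s ^ (n+1) * r ^ (n+1))
              + (M * s ^ (n+1)) * ((r ^ (n+1) - s ^ (n+1)) * r ^ (n+1)) := by
              refine add_le_add (mul_le_mul_of_nonneg_right h1 (by positivity))
                (mul_le_mul_of_nonneg_right h2
                  (mul_nonneg (sub_nonneg.2 hQP) hP.le))
          _ = 2 * M * (r ^ (n+1) - s ^ (n+1)) * (r ^ (n+1) * s ^ (n+1)) := by ring
      have hpd : r ^ (n+1) - s ^ (n+1) ≤ ((n:ℝ)+1) * r ^ n * (r - s) := by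
        have := stmt1_pow_diff_le n s r hs0 hsr
        exact_mod_cast this
      have h5 : |a - b| * s ≤ 2 * M * (r - s) := by
        calc |a - b| * s ≤ (2 * M * (r ^ (n+1) - s ^ (n+1)) / (((n:ℝ)+1) * r ^ (n+1))) * s :=
              mul_le_mul_of_nonneg_right h4 hs0
          _ ≤ 2 * M * (r - s) := by
              rw [div_mul_eq_mul_div, div_le_iff₀ (mul_pos hD0 hP)]
              have hsP : s * r ^ n ≤ r ^ (n+1) := by
                calc s * r ^ n ≤ r * r ^ n := mul_le_mul_of_nonneg_right hsr (by positivity)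
                  _ = r ^ (n+1) := (pow_succ' r n).symm
              have hrs0 : (0:ℝ) ≤ r - s := sub_nonneg.2 hsr
              have h6 : (0:ℝ) ≤ 2 * M * (((n:ℝ)+1)) * (r - s) := by positivity
              nlinarith [mul_le_mul_of_nonneg_left hsP h6,
                mul_le_mul_of_nonneg_left hpd (mul_nonneg (mul_nonneg (by norm_num : (0:ℝ) ≤ 2) hM) hs0)]
      calc |a - b| * s ≤ 2 * M * (r - s) := h5
        _ ≤ 2 * M * ‖x - y‖ := mul_le_mul_of_nonneg_left hnormsub (by positivity)
    have hdecomp : a • x - b • y = a • (x - y) + (a - b) • y := by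
      rw [smul_sub, sub_smul]
      abel
    calc dist (V x) (V y) = ‖a • x - b • y‖ := by rw [dist_eq_norm, hVx, hVy]
      _ = ‖a • (x - y) + (a - b) • y‖ := by rw [hdecomp]
      _ ≤ ‖a • (x - y)‖ + ‖(a - b) • y‖ := norm_add_le _ _
      _ = |a| * ‖x - y‖ + |a - b| * s := by rw [norm_smul, norm_smul, Real.norm_eq_abs, Real.norm_eq_abs]
      _ ≤ M * ‖x - y‖ + 2 * M * ‖x - y‖ := by
          refine add_le_add (mul_le_mul_of_nonneg_right bound1 (norm_nonneg _)) bound2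
      _ = 3 * M * dist x y := by rw [dist_eq_norm]; ring
  refine ⟨?_, hlip, ?_⟩
  · intro x hx
    rw [hV x, hx, show (∫ s in (0:ℝ)..R, f s * s ^ n) = w R from rfl, hwR, zero_div, zero_smul]
  · -- distributional divergence
    intro φ hφ hsupp
    simp only [hF]
    have hφdiff : Differentiable ℝ φ := hφ.differentiable (by simp)
    have hfdc : Continuous (fderiv ℝ φ) := hφ.continuous_fderiv (by simp)
    have hgradc : Continuous (fun z => gradient φ z) :=
      (InnerProductSpace.toDual ℝ (EuclideanSpace ℝ (Fin (n+1)))).symm.continuous.comp hfdc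
    have hVcont : ContinuousOn V (Metric.closedBall (0 : EuclideanSpace ℝ (Fin (n+1))) R) :=
      hlip.continuousOn
    obtain ⟨C₂, hC₂⟩ := (isCompact_closedBall (0 : EuclideanSpace ℝ (Fin (n+1)))
      R).exists_bound_of_continuousOn hgradc.continuousOn
    have hC₂0 : 0 ≤ C₂ := le_trans (norm_nonneg _) (hC₂ 0 (mem_closedBall_self hR.le))
    obtain ⟨C₃, hC₃⟩ := (isCompact_closedBall (0 : EuclideanSpace ℝ (Fin (n+1)))
      R).exists_bound_of_continuousOn hφ.continuous.continuousOn
    have hC₃0 : 0 ≤ C₃ := le_trans (norm_nonneg _) (hC₃ 0 (mem_closedBall_self hR.le))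
    have hD' : (1:ℝ) ≤ (n:ℝ) + 1 := by push_cast; linarith [Nat.cast_nonneg (α := ℝ) n]
    have hD0 : (0:ℝ) < (n:ℝ) + 1 := by positivity
    have hVbd : ∀ z ∈ Metric.closedBall (0 : EuclideanSpace ℝ (Fin (n+1))) R, ‖V z‖ ≤ M * R := by
      intro z hz
      rw [mem_closedBall, dist_zero_right] at hz
      rw [hV z, norm_smul, Real.norm_eq_abs]
      rcases eq_or_lt_of_le (norm_nonneg z) with h0 | h0
      · rw [← h0, mul_zero]; positivity
      · have hP : (0:ℝ) < ‖z‖ ^ (n+1) := pow_pos h0 _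
        calc |(∫ s in (0:ℝ)..‖z‖, f s * s ^ n) / ‖z‖ ^ (n+1)| * ‖z‖
            ≤ (M * ‖z‖ ^ (n+1) / ((n:ℝ)+1) / ‖z‖ ^ (n+1)) * ‖z‖ := by
              refine mul_le_mul_of_nonneg_right ?_ (norm_nonneg z)
              rw [abs_div, abs_of_pos hP]
              gcongr
              exact hwb ‖z‖ (norm_nonneg z) hz
          _ = M * ‖z‖ / ((n:ℝ)+1) := by field_simp
          _ ≤ M * ‖z‖ := div_le_self (by positivity) hD'
          _ ≤ M * R := mul_le_mul_of_nonneg_left hz hM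
    have hb1 : IntegrableOn (fun x => (inner ℝ (V x) (gradient φ x) : ℝ))
        (Metric.ball (0 : EuclideanSpace ℝ (Fin (n+1))) R) := by
      refine Integrable.mono' (g := fun _ => M * R * C₂)
        (integrableOn_const measure_ball_lt_top.ne) ?_ ?_
      · exact ((hVcont.mono ball_subset_closedBall).inner
          hgradc.continuousOn).aestronglyMeasurable measurableSet_ball
      · filter_upwards [ae_restrict_mem measurableSet_ball] with z hz
        calc ‖(inner ℝ (V z) (gradient φ z) : ℝ)‖ ≤ ‖V z‖ * ‖gradient φ z‖ := norm_inner_le_norm _ _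
          _ ≤ (M * R) * C₂ := mul_le_mul (hVbd z (ball_subset_closedBall hz))
              (hC₂ z (ball_subset_closedBall hz)) (norm_nonneg _) (by positivity)
    have hb2 : IntegrableOn (fun x => f ‖x‖ * φ x)
        (Metric.ball (0 : EuclideanSpace ℝ (Fin (n+1))) R) := by
      refine Integrable.mono' (g := fun _ => M * C₃)
        (integrableOn_const measure_ball_lt_top.ne) ?_ ?_
      · exact ((hf.comp measurable_norm).mul hφ.continuous.measurable).aestronglyMeasurable
      · filter_upwards [ae_restrict_mem measurableSet_ball,
          Filter.Eventually.filter_mono (ae_mono Measure.restrict_le_self) h0ae]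
          with z hz hz0
        rw [Real.norm_eq_abs, abs_mul]
        refine mul_le_mul (hfM ‖z‖ ⟨norm_pos_iff.2 hz0, mem_ball_zero_iff.1 hz⟩) ?_
          (abs_nonneg _) hM
        have := hC₃ z (ball_subset_closedBall hz)
        rwa [Real.norm_eq_abs] at this
    rw [← MeasureTheory.integral_indicator measurableSet_ball,
      ← MeasureTheory.integral_indicator measurableSet_ball,
      stmt1_integral_polar volume _ ((integrable_indicator_iff measurableSet_ball).2 hb1),
      stmt1_integral_polar volume _ ((integrable_indicator_iff measurableSet_ball).2 hb2),
      ← MeasureTheory.integral_neg]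
    simp only [hfr, Nat.add_sub_cancel]
    refine integral_congr_ae (Filter.Eventually.of_forall fun ω => ?_)
    have hω : ‖(ω : EuclideanSpace ℝ (Fin (n+1)))‖ = 1 := mem_sphere_zero_iff_norm.1 ω.2
    set g : ℝ → ℝ := fun t => φ (t • (ω : EuclideanSpace ℝ (Fin (n+1)))) with hgdef
    set g' : ℝ → ℝ := fun t => fderiv ℝ φ (t • (ω : EuclideanSpace ℝ (Fin (n+1))))
      (ω : EuclideanSpace ℝ (Fin (n+1))) with hg'def
    have hder : ∀ t, HasDerivAt g (g' t) t := by
      intro t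
      have h1 : HasDerivAt (fun u : ℝ => u • (ω : EuclideanSpace ℝ (Fin (n+1))))
          ((1:ℝ) • (ω : EuclideanSpace ℝ (Fin (n+1)))) t := (hasDerivAt_id t).smul_const _
      have h2 := ((hφdiff (t • (ω : EuclideanSpace ℝ (Fin (n+1))))).hasFDerivAt).comp_hasDerivAt t h1
      simpa [hgdef, hg'def, one_smul, Function.comp_def] using h2
    have hg'c : Continuous g' :=
      (hfdc.comp (continuous_id.smul continuous_const)).clm_apply continuous_const
    have hgR : g R = 0 := by
      show φ (R • (ω : EuclideanSpace ℝ (Fin (n+1)))) = 0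
      apply image_eq_zero_of_notMem_tsupport
      intro hmem
      have hmem' := hsupp hmem
      rw [mem_ball_zero_iff, norm_smul, hω, mul_one, Real.norm_eq_abs, abs_of_pos hR] at hmem'
      exact lt_irrefl R hmem'
    have e1 : (∫ r in Ioi (0:ℝ), r ^ n * (Metric.ball (0 : EuclideanSpace ℝ (Fin (n+1))) R).indicator
          (fun x => (inner ℝ (V x) (gradient φ x) : ℝ)) (r • (ω : EuclideanSpace ℝ (Fin (n+1)))))
        = ∫ r in (0:ℝ)..R, w r * g' r := by
      have heq : ∀ r ∈ Ioi (0:ℝ), r ^ n * (Metric.ball (0 : EuclideanSpace ℝ (Fin (n+1))) R).indicator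
          (fun x => (inner ℝ (V x) (gradient φ x) : ℝ)) (r • (ω : EuclideanSpace ℝ (Fin (n+1))))
          = (Ioo (0:ℝ) R).indicator (fun r => w r * g' r) r := by
        intro r hr
        rw [mem_Ioi] at hr
        have hnrm : ‖r • (ω : EuclideanSpace ℝ (Fin (n+1)))‖ = r := by
          rw [norm_smul, hω, mul_one, Real.norm_eq_abs, abs_of_pos hr]
        by_cases h : r < R
        · rw [indicator_of_mem (mem_ball_zero_iff.2 (by rw [hnrm]; exact h)),
            indicator_of_mem (Set.mem_Ioo.mpr ⟨hr, h⟩)]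
          rw [hV, hnrm, real_inner_smul_left, real_inner_smul_left]
          have hinner2 : (inner ℝ (ω : EuclideanSpace ℝ (Fin (n+1)))
              (gradient φ (r • (ω : EuclideanSpace ℝ (Fin (n+1))))) : ℝ) = g' r := by
            rw [real_inner_comm]
            exact InnerProductSpace.toDual_symm_apply
          rw [hinner2]
          have hr0 : r ≠ 0 := ne_of_gt hr
          field_simp
          ring
        · rw [indicator_of_notMem (fun hm => h (by rw [← hnrm]; exact mem_ball_zero_iff.1 hm)),
            indicator_of_notMem (fun hm : r ∈ Ioo (0:ℝ) R => h hm.2), mul_zero]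
      rw [setIntegral_congr_fun measurableSet_Ioi heq,
        setIntegral_indicator measurableSet_Ioo,
        Set.inter_eq_self_of_subset_right (fun t ht => ht.1),
        ← integral_Ioc_eq_integral_Ioo, ← intervalIntegral.integral_of_le hR.le]
    have e2 : (∫ r in Ioi (0:ℝ), r ^ n * (Metric.ball (0 : EuclideanSpace ℝ (Fin (n+1))) R).indicator
          (fun x => f ‖x‖ * φ x) (r • (ω : EuclideanSpace ℝ (Fin (n+1)))))
        = ∫ r in (0:ℝ)..R, f r * r ^ n * g r := by
      have heq : ∀ r ∈ Ioi (0:ℝ), r ^ n * (Metric.ball (0 : EuclideanSpace ℝ (Fin (n+1))) R).indicator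
          (fun x => f ‖x‖ * φ x) (r • (ω : EuclideanSpace ℝ (Fin (n+1))))
          = (Ioo (0:ℝ) R).indicator (fun r => f r * r ^ n * g r) r := by
        intro r hr
        rw [mem_Ioi] at hr
        have hnrm : ‖r • (ω : EuclideanSpace ℝ (Fin (n+1)))‖ = r := by
          rw [norm_smul, hω, mul_one, Real.norm_eq_abs, abs_of_pos hr]
        by_cases h : r < R
        · rw [indicator_of_mem (mem_ball_zero_iff.2 (by rw [hnrm]; exact h)),
            indicator_of_mem (Set.mem_Ioo.mpr ⟨hr, h⟩), hnrm]
          show r ^ n * (f r * φ (r • _)) = f r * r ^ n * g r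
          ring
        · rw [indicator_of_notMem (fun hm => h (by rw [← hnrm]; exact mem_ball_zero_iff.1 hm)),
            indicator_of_notMem (fun hm : r ∈ Ioo (0:ℝ) R => h hm.2), mul_zero]
      rw [setIntegral_congr_fun measurableSet_Ioi heq,
        setIntegral_indicator measurableSet_Ioo,
        Set.inter_eq_self_of_subset_right (fun t ht => ht.1),
        ← integral_Ioc_eq_integral_Ioo, ← intervalIntegral.integral_of_le hR.le]
    exact e1.trans ((stmt1_parts R hR n f hf M hM hfM g g' hder hg'c hgR).trans
      (congrArg Neg.neg e2.symm))
end

section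
/- Let $w:\mathbb{R}\to[0,\infty)$ be $C^2$ and positive on all of $\mathbb{R}$, even, with $w'(0)=0$, satisfying $-w''+\beta w^{\beta-1}=\lambda$ on $\mathbb{R}$ for some $\lambda\in\mathbb{R}$ and $0<\beta<1$, and with $w(x)\to 0$ as $x\to+\infty$. Then one reaches a contradiction: no such $w$ exists. (Consequently any such solution must have compact support.) -/
/-!
As `w → 0⁺` and `β - 1 < 0`, the term `β w^{β-1}` blows up, so by the equation `w'' → ∞`.
Integrating twice gives `w' → ∞` and then `w → ∞`, which contradicts `w → 0`.
-/

open Filter Set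

theorem tendsto_atTop_of_tendsto_deriv_atTop {f : ℝ → ℝ} (hf : Differentiable ℝ f)
    (hf' : Tendsto (deriv f) atTop atTop) : Tendsto f atTop atTop := by
  obtain ⟨a, ha⟩ := eventually_atTop.1 (hf'.eventually_ge_atTop 1)
  have hgrowth : ∀ x ≥ a, x - a + f a ≤ f x := by
    intro x hx
    have := (convex_Ici a).mul_sub_le_image_sub_of_le_deriv hf.continuous.continuousOn
      hf.differentiableOn (fun y hy => ha y (interior_subset hy)) a self_mem_Ici x hx hx
    linarith
  exact tendsto_atTop_mono' atTop (eventually_atTop.2 ⟨a, hgrowth⟩)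
    (tendsto_atTop_add_const_right _ _ (tendsto_atTop_add_const_right _ _ tendsto_id))

theorem stmt_7_general (β lam : ℝ) (hβ0 : 0 < β) (hβ1 : β < 1) (w : ℝ → ℝ)
    (hw : ContDiff ℝ 2 w) (hpos : ∀ x, 0 < w x)
    (hode : ∀ x, -(deriv (deriv w) x) + β * w x ^ (β - 1) = lam)
    (hlim : Tendsto w atTop (nhds 0)) :
    False := by
  have hpow : Tendsto (fun x => w x ^ (β - 1)) atTop atTop :=
    (tendsto_rpow_neg_nhdsGT_zero (by linarith)).comp
      (tendsto_nhdsWithin_iff.2 ⟨hlim, .of_forall hpos⟩)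
  have hw'' : Tendsto (deriv (deriv w)) atTop atTop := by
    refine (tendsto_atTop_add_const_right _ (-lam) (hpow.const_mul_atTop hβ0)).congr fun x => ?_
    linarith [hode x]
  have hw' := tendsto_atTop_of_tendsto_deriv_atTop hw.differentiable_deriv_two hw''
  have hwtop := tendsto_atTop_of_tendsto_deriv_atTop (hw.differentiable two_ne_zero) hw'
  exact not_tendsto_nhds_of_tendsto_atTop hwtop 0 hlim

/-- No globally positive even `C²` solution of `-w'' + β w^{β-1} = λ` (with
`0 < β < 1`, `w'(0)=0`) can tend to `0` at `+∞`: any such solution must have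
compact support. -/
theorem stmt_7 (β lam : ℝ) (hβ0 : 0 < β) (hβ1 : β < 1) (w : ℝ → ℝ)
    (hw : ContDiff ℝ 2 w) (hpos : ∀ x, 0 < w x)
    (heven : ∀ x, w (-x) = w x) (h0 : deriv w 0 = 0)
    (hode : ∀ x, -(deriv (deriv w) x) + β * w x ^ (β - 1) = lam)
    (hlim : Tendsto w atTop (nhds 0)) :
    False :=
  stmt_7_general β lam hβ0 hβ1 w hw hpos hode hlim
end

section
/- Let $w:\mathbb{R}\to[0,\infty)$ be Lipschitz, even, non-increasing on $\mathbb{R}^+$, compactly supported in $[-R_0,R_0]$, smooth on $\{w>0\}$ with $w'(0)=0$ and $|w'(x)|\leq C|x|$ near $0$. Define $\rho:\mathbb{R}^2\to[0,\infty)$ by $\rho(x)=\int_{|x|}^{\infty}\frac{-w'(s)}{\pi\sqrt{s^2-|x|^2}}\,ds$. Then $\rho$ is bounded, compactly supported in the closed ball $\overline{B}(0,R_0)$, and radial. -/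
open MeasureTheory

/-- The 2D radial kernel `ρ(x) = ∫_{|x|}^∞ (-w'(s))/(π√(s²-|x|²)) ds` built from
a Lipschitz, even profile `w`, non-increasing on `ℝ⁺`, supported in `[-R₀,R₀]`,
smooth on `{w>0}` with `w'(0)=0` and `|w'(x)| ≤ C|x|` near `0`, is bounded,
supported in the closed ball `B̄(0,R₀)`, and radial. -/
theorem stmt_17 (w : ℝ → ℝ) (R₀ : ℝ) (hR₀ : 0 < R₀)
    (hnonneg : ∀ x, 0 ≤ w x)
    (hLip : ∃ K : NNReal, LipschitzWith K w)
    (heven : ∀ x, w (-x) = w x)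
    (hmono : AntitoneOn w (Set.Ici 0))
    (hsupp : ∀ x : ℝ, R₀ < |x| → w x = 0)
    (hsmooth : ContDiffOn ℝ (⊤ : ℕ∞) w {x | 0 < w x})
    (h0 : deriv w 0 = 0)
    (hlin : ∃ C δ : ℝ, 0 < C ∧ 0 < δ ∧ ∀ x : ℝ, |x| < δ → |deriv w x| ≤ C * |x|)
    (ρ : EuclideanSpace ℝ (Fin 2) → ℝ)
    (hρ : ∀ x, ρ x = ∫ s in Set.Ioi ‖x‖,
      (-(deriv w s)) / (Real.pi * Real.sqrt (s ^ 2 - ‖x‖ ^ 2))) :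
    (∃ M : ℝ, ∀ x, |ρ x| ≤ M) ∧
    (∀ x, R₀ < ‖x‖ → ρ x = 0) ∧
    (∀ x y, ‖x‖ = ‖y‖ → ρ x = ρ y) := by
  obtain ⟨K, hK⟩ := hLip
  obtain ⟨C, δ, hC, hδ, hlin⟩ := hlin
  -- derivative vanishes beyond R₀
  have hderiv0 : ∀ s : ℝ, R₀ < s → deriv w s = 0 := by
    intro s hs
    have hev : w =ᶠ[nhds s] fun _ => (0 : ℝ) := by
      filter_upwards [Ioi_mem_nhds hs] with t ht
      exact hsupp t (lt_of_lt_of_le ht (le_abs_self t))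
    rw [hev.deriv_eq, deriv_const]
  -- derivative bounded by K everywhere
  have hderivK : ∀ s : ℝ, |deriv w s| ≤ K := by
    intro s
    have h1 : ‖fderiv ℝ w s‖ ≤ K := norm_fderiv_le_of_lipschitz ℝ hK
    have h2 : deriv w s = fderiv ℝ w s 1 := rfl
    calc |deriv w s| = ‖fderiv ℝ w s 1‖ := by rw [h2]; rfl
      _ ≤ ‖fderiv ℝ w s‖ * ‖(1 : ℝ)‖ := (fderiv ℝ w s).le_opNorm 1
      _ ≤ K := by simpa using h1
  set C₀ : ℝ := max C (K / δ) with hC₀def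
  have hC₀pos : 0 < C₀ := lt_max_of_lt_left hC
  have hderivlin : ∀ s : ℝ, 0 < s → |deriv w s| ≤ C₀ * s := by
    intro s hs
    rcases lt_or_ge s δ with h | h
    · calc |deriv w s| ≤ C * |s| := hlin s (by rwa [abs_of_pos hs])
        _ = C * s := by rw [abs_of_pos hs]
        _ ≤ C₀ * s := by gcongr; exact le_max_left _ _
    · calc |deriv w s| ≤ K := hderivK s
        _ = K / δ * δ := (div_mul_cancel₀ _ hδ.ne').symm
        _ ≤ K / δ * s := by gcongr
        _ ≤ C₀ * s := by gcongr; exact le_max_right _ _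
  -- the zero part (used twice)
  have hzero : ∀ x : EuclideanSpace ℝ (Fin 2), R₀ < ‖x‖ → ρ x = 0 := by
    intro x hx
    rw [hρ]
    apply setIntegral_eq_zero_of_forall_eq_zero
    intro s hs
    rw [hderiv0 s (hx.trans hs)]
    simp
  refine ⟨⟨2 * C₀ * R₀ / Real.pi, ?_⟩, hzero, ?_⟩
  · intro x
    rcases le_or_gt ‖x‖ R₀ with hr | hr
    swap
    · rw [hzero x hr, abs_zero]; positivity
    set r : ℝ := ‖x‖ with hrdef
    have hr0 : 0 ≤ r := norm_nonneg x
    set A : ℝ := C₀ * Real.sqrt R₀ / Real.pi with hAdef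
    have hA : 0 ≤ A := by positivity
    -- dominating function
    set g : ℝ → ℝ := fun s => A * (s - r) ^ (-(1/2) : ℝ) with hgdef
    have hgint : IntegrableOn g (Set.Ioc r R₀) := by
      have h1 : IntervalIntegrable (fun x : ℝ => x ^ (-(1/2) : ℝ)) volume 0 (R₀ - r) :=
        intervalIntegral.intervalIntegrable_rpow' (by norm_num)
      have h2 := (h1.comp_sub_right r)
      rw [zero_add, sub_add_cancel] at h2
      have h3 : IntegrableOn (fun s : ℝ => (s - r) ^ (-(1/2) : ℝ)) (Set.Ioc r R₀) :=
        (intervalIntegrable_iff_integrableOn_Ioc_of_le hr).mp h2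
      exact h3.const_mul A
    have hgind : Integrable ((Set.Ioc r R₀).indicator g) (volume.restrict (Set.Ioi r)) :=
      (hgint.integrable_indicator measurableSet_Ioc).restrict
    -- pointwise bound
    have hbound : ∀ s ∈ Set.Ioi r,
        ‖(-(deriv w s)) / (Real.pi * Real.sqrt (s ^ 2 - r ^ 2))‖
          ≤ (Set.Ioc r R₀).indicator g s := by
      intro s hs
      simp only [Set.mem_Ioi] at hs
      rcases le_or_gt s R₀ with hsR | hsR
      · have hmem : s ∈ Set.Ioc r R₀ := ⟨hs, hsR⟩
        rw [Set.indicator_of_mem hmem]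
        have hspos : 0 < s := lt_of_le_of_lt hr0 hs
        have hsub : 0 < s - r := sub_pos.mpr hs
        have hfact : s ^ 2 - r ^ 2 = (s - r) * (s + r) := by ring
        have hsqrt : Real.sqrt (s ^ 2 - r ^ 2)
            = Real.sqrt (s - r) * Real.sqrt (s + r) := by
          rw [hfact, Real.sqrt_mul hsub.le]
        have hsrpos : 0 < s + r := by linarith
        have key : s / Real.sqrt (s + r) ≤ Real.sqrt R₀ := by
          have h1 : Real.sqrt s ≤ Real.sqrt (s + r) := by
            apply Real.sqrt_le_sqrt; linarith
          have h2 : s / Real.sqrt (s + r) ≤ s / Real.sqrt s := by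
            apply div_le_div_of_nonneg_left hspos.le (Real.sqrt_pos.mpr hspos) h1
          have h3 : s / Real.sqrt s = Real.sqrt s := by
            rw [Real.div_sqrt]
          calc s / Real.sqrt (s + r) ≤ Real.sqrt s := by rw [← h3]; exact h2
            _ ≤ Real.sqrt R₀ := Real.sqrt_le_sqrt hsR
        have hπ : 0 < Real.pi := Real.pi_pos
        rw [norm_div, norm_neg, Real.norm_eq_abs, Real.norm_eq_abs]
        have hden : |Real.pi * Real.sqrt (s ^ 2 - r ^ 2)|
            = Real.pi * (Real.sqrt (s - r) * Real.sqrt (s + r)) := by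
          rw [abs_of_nonneg (by positivity), hsqrt]
        rw [hden]
        have hrpow : (s - r) ^ (-(1/2) : ℝ) = 1 / Real.sqrt (s - r) := by
          rw [Real.rpow_neg hsub.le, ← Real.sqrt_eq_rpow]
          exact (one_div _).symm
        rw [hgdef]
        simp only [hrpow]
        have hnum : |deriv w s| ≤ C₀ * s := hderivlin s hspos
        have hsqsub : 0 < Real.sqrt (s - r) := Real.sqrt_pos.mpr hsub
        have hsqadd : 0 < Real.sqrt (s + r) := Real.sqrt_pos.mpr hsrpos
        rw [div_le_iff₀ (by positivity)]
        have expand : A * (1 / Real.sqrt (s - r)) * (Real.pi * (Real.sqrt (s - r) * Real.sqrt (s + r)))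
            = C₀ * (Real.sqrt R₀ * Real.sqrt (s + r)) := by
          rw [hAdef]; field_simp
        rw [expand]
        calc |deriv w s| ≤ C₀ * s := hnum
          _ ≤ C₀ * (Real.sqrt R₀ * Real.sqrt (s + r)) := by
              gcongr
              calc s = s / Real.sqrt (s + r) * Real.sqrt (s + r) := by field_simp
                _ ≤ Real.sqrt R₀ * Real.sqrt (s + r) := by gcongr
          _ = C₀ * (Real.sqrt R₀ * Real.sqrt (s + r)) := rfl
      · rw [hderiv0 s hsR, Set.indicator_of_notMem (by simp [Set.mem_Ioc]; intro _; linarith)]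
        simp
    have haebound : ∀ᵐ s ∂(volume.restrict (Set.Ioi r)),
        ‖(-(deriv w s)) / (Real.pi * Real.sqrt (s ^ 2 - r ^ 2))‖
          ≤ (Set.Ioc r R₀).indicator g s := by
      filter_upwards [self_mem_ae_restrict measurableSet_Ioi] with s hs
      exact hbound s hs
    have hmain : |ρ x| ≤ ∫ s in Set.Ioi r, (Set.Ioc r R₀).indicator g s := by
      rw [hρ]
      exact norm_integral_le_of_norm_le hgind haebound
    -- compute the dominating integral
    have hval : ∫ s in Set.Ioi r, (Set.Ioc r R₀).indicator g s
        = A * (2 * (R₀ - r) ^ ((1:ℝ)/2)) := by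
      rw [setIntegral_indicator measurableSet_Ioc]
      have hinter : Set.Ioi r ∩ Set.Ioc r R₀ = Set.Ioc r R₀ := by
        ext t; simp only [Set.mem_inter_iff, Set.mem_Ioi, Set.mem_Ioc]; tauto
      rw [hinter]
      rw [← intervalIntegral.integral_of_le hr]
      rw [hgdef]
      rw [intervalIntegral.integral_const_mul]
      have : (∫ x in r..R₀, (x - r) ^ (-(1/2) : ℝ))
          = ∫ x in (r - r)..(R₀ - r), x ^ (-(1/2) : ℝ) :=
        intervalIntegral.integral_comp_sub_right (fun x : ℝ => x ^ (-(1/2) : ℝ)) r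
      rw [this, sub_self]
      rw [integral_rpow (Or.inl (by norm_num))]
      rw [Real.zero_rpow (by norm_num)]
      norm_num
      left; ring
    rw [hval] at hmain
    calc |ρ x| ≤ A * (2 * (R₀ - r) ^ ((1:ℝ)/2)) := hmain
      _ ≤ A * (2 * R₀ ^ ((1:ℝ)/2)) := by
          apply mul_le_mul_of_nonneg_left _ hA
          apply mul_le_mul_of_nonneg_left _ (by norm_num : (0:ℝ) ≤ 2)
          exact Real.rpow_le_rpow (by linarith) (by linarith) (by norm_num)
      _ = 2 * C₀ * R₀ / Real.pi := by
          rw [hAdef, ← Real.sqrt_eq_rpow, div_mul_eq_mul_div]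
          congr 1
          linear_combination 2 * C₀ * Real.mul_self_sqrt hR₀.le
  · intro x y h
    rw [hρ, hρ, h]
end
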